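/- Let S ⊆ ℝ be open, let g : S → ℂ be smooth, and let ε ∈ (0,1], A > 0, C ≥ 1 be such that |1 − g(ω)| ≥ ε for all ω ∈ S and sup_{ω ∈ S} |g^{(j)}(ω)| ≤ C A^j j! for every integer j ≥ 1. Then the function h = 1/(1 − g) is smooth on S and satisfies, for every integer m ≥ 0 and every ω ∈ S, |h^{(m)}(ω)| ≤ ε^{−1} (2AC/ε)^m m!. In particular, if g satisfies analytic-type (Gevrey-1) factorial derivative bounds on S and 1 − g is bounded away from zero there, then 1/(1 − g) satisfies analytic-type factorial derivative bounds on S as well. -/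

import Mathlib

open Real

private lemma choose_sum_aux (a b : ℕ → ℂ) (n : ℕ) :
    ∑ k ∈ Finset.range (n+1), (n.choose k : ℂ) * (a (k+1) * b (n-k))
      + ∑ k ∈ Finset.range (n+1), (n.choose k : ℂ) * (a k * b (n+1-k))
    = ∑ k ∈ Finset.range (n+2), ((n+1).choose k : ℂ) * (a k * b (n+1-k)) := by
  rw [Finset.sum_range_succ' (fun k => ((n+1).choose k : ℂ) * (a k * b (n+1-k))) (n+1),
      Finset.sum_range_succ' (fun k => (n.choose k : ℂ) * (a k * b (n+1-k))) n]
  have h0 : ∑ k ∈ Finset.range n, (n.choose (k+1) : ℂ) * (a (k+1) * b (n+1-(k+1)))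
      = ∑ k ∈ Finset.range (n+1), (n.choose (k+1) : ℂ) * (a (k+1) * b (n+1-(k+1))) := by
    rw [Finset.sum_range_succ, Nat.choose_succ_self]
    simp
  rw [h0, ← add_assoc, ← Finset.sum_add_distrib]
  simp only [Nat.choose_zero_right, Nat.cast_one]
  congr 1
  refine Finset.sum_congr rfl fun k _ => ?_
  rw [Nat.succ_sub_succ, Nat.choose_succ_succ]
  push_cast
  ring

private lemma leibniz_within {S : Set ℝ} (hS : IsOpen S) {f g : ℝ → ℂ}
    (hf : ContDiffOn ℝ (⊤ : ℕ∞) f S) (hg : ContDiffOn ℝ (⊤ : ℕ∞) g S) :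
    ∀ (n : ℕ), ∀ x ∈ S, iteratedDerivWithin n (fun y => f y * g y) S x =
      ∑ k ∈ Finset.range (n + 1), (n.choose k : ℂ) *
        (iteratedDerivWithin k f S x * iteratedDerivWithin (n - k) g S x) := by
  have hu : UniqueDiffOn ℝ S := hS.uniqueDiffOn
  have hdf : ∀ (k : ℕ), ∀ x ∈ S, DifferentiableWithinAt ℝ (iteratedDerivWithin k f S) S x :=
    fun k x hx => (hf.differentiableOn_iteratedDerivWithin
      (by exact_mod_cast lt_top_iff_ne_top.2 (by simp)) hu) x hx
  have hdg : ∀ (k : ℕ), ∀ x ∈ S, DifferentiableWithinAt ℝ (iteratedDerivWithin k g S) S x :=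
    fun k x hx => (hg.differentiableOn_iteratedDerivWithin
      (by exact_mod_cast lt_top_iff_ne_top.2 (by simp)) hu) x hx
  intro n
  induction n with
  | zero => intro x hx; simp
  | succ n ih =>
    intro x hx
    rw [iteratedDerivWithin_succ,
      derivWithin_congr (fun y hy => ih y hy) (ih x hx)]
    rw [derivWithin_fun_sum (A := fun k y => (n.choose k : ℂ) *
        (iteratedDerivWithin k f S y * iteratedDerivWithin (n - k) g S y))
      (fun k _ => (((hdf k x hx).mul (hdg _ x hx)).const_mul _))]
    have hterm : ∀ k ∈ Finset.range (n+1),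
        derivWithin (fun y => (n.choose k : ℂ) *
          (iteratedDerivWithin k f S y * iteratedDerivWithin (n - k) g S y)) S x
        = (n.choose k : ℂ) * (iteratedDerivWithin (k+1) f S x * iteratedDerivWithin (n-k) g S x
          + iteratedDerivWithin k f S x * iteratedDerivWithin (n+1-k) g S x) := by
      intro k hk
      have hk' : k ≤ n := Nat.lt_succ_iff.1 (Finset.mem_range.1 hk)
      rw [derivWithin_const_mul (d := fun y =>
          iteratedDerivWithin k f S y * iteratedDerivWithin (n - k) g S y) _ ((hdf k x hx).mul (hdg _ x hx)),
        derivWithin_fun_mul (hdf k x hx) (hdg _ x hx),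
        ← iteratedDerivWithin_succ, ← iteratedDerivWithin_succ]
      have : n - k + 1 = n + 1 - k := by omega
      rw [this]
    rw [Finset.sum_congr rfl hterm]
    have := choose_sum_aux (fun k => iteratedDerivWithin k f S x)
      (fun k => iteratedDerivWithin k g S x) n
    rw [← this, ← Finset.sum_add_distrib]
    exact Finset.sum_congr rfl fun k _ => by ring

/-- Faà di Bruno estimate: if `g` satisfies analytic-type (Gevrey-1) factorial derivative
bounds on an open set `S` and `|1 - g| ≥ ε` there, then `h = 1/(1-g)` is smooth on `S` and
satisfies `|h⁽ᵐ⁾(ω)| ≤ ε⁻¹ (2AC/ε)^m m!` on `S`. -/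
theorem resolvent_factor_gevrey_bounds
    (S : Set ℝ) (hS : IsOpen S)
    (g : ℝ → ℂ) (hg : ContDiffOn ℝ (⊤ : ℕ∞) g S)
    (ε A C : ℝ) (hε0 : 0 < ε) (hε1 : ε ≤ 1) (hA : 0 < A) (hC : 1 ≤ C)
    (hlow : ∀ ω ∈ S, ε ≤ ‖1 - g ω‖)
    (hder : ∀ j : ℕ, 1 ≤ j → ∀ ω ∈ S,
      ‖iteratedDerivWithin j g S ω‖ ≤ C * A ^ j * (j.factorial : ℝ)) :
    ContDiffOn ℝ (⊤ : ℕ∞) (fun ω => (1 - g ω)⁻¹) S ∧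
    ∀ m : ℕ, ∀ ω ∈ S,
      ‖iteratedDerivWithin m (fun ω => (1 - g ω)⁻¹) S ω‖ ≤
        ε⁻¹ * (2 * A * C / ε) ^ m * (m.factorial : ℝ) := by
  have hu : UniqueDiffOn ℝ S := hS.uniqueDiffOn
  set B : ℝ := 2 * A * C / ε with hB
  have hB0 : 0 < B := by positivity
  have hne : ∀ ω ∈ S, 1 - g ω ≠ 0 := by
    intro ω hω h0
    have := hlow ω hω
    rw [h0, norm_zero] at this
    linarith
  have hf1 : ContDiffOn ℝ (⊤ : ℕ∞) (fun ω => 1 - g ω) S := contDiffOn_const.sub hg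
  have hh : ContDiffOn ℝ (⊤ : ℕ∞) (fun ω => (1 - g ω)⁻¹) S := hf1.inv hne
  refine ⟨hh, ?_⟩
  set h : ℝ → ℂ := fun ω => (1 - g ω)⁻¹ with hhdef
  -- norm of (1-g)^(k+1) equals norm of g^(k+1)
  have hf1der : ∀ (k : ℕ), ∀ ω ∈ S,
      ‖iteratedDerivWithin (k+1) (fun y => 1 - g y) S ω‖
        = ‖iteratedDerivWithin (k+1) g S ω‖ := by
    intro k ω hω
    rw [iteratedDerivWithin_const_sub (Nat.succ_pos k) 1,
      iteratedDerivWithin_fun_neg, norm_neg]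
  -- the Leibniz identity applied to (1-g) * h = 1
  have hzero : ∀ (n : ℕ), ∀ ω ∈ S,
      iteratedDerivWithin (n+1) (fun y => (1 - g y) * h y) S ω = 0 := by
    intro n ω hω
    have heq : Set.EqOn (fun y => (1 - g y) * h y) (fun _ => (1 : ℂ)) S := by
      intro y hy
      simp only [hhdef]
      exact mul_inv_cancel₀ (hne y hy)
    rw [iteratedDerivWithin_congr heq hω,
      iteratedDerivWithin_eq_iteratedFDerivWithin,
      iteratedFDerivWithin_const_of_ne (Nat.succ_ne_zero n) _ S]
    simp
  intro m
  induction m using Nat.strong_induction_on with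
  | _ m ih =>
    match m with
    | 0 =>
      intro ω hω
      simp only [iteratedDerivWithin_zero, pow_zero, Nat.factorial_zero, Nat.cast_one,
        mul_one]
      rw [norm_inv]
      exact inv_anti₀ hε0 (hlow ω hω)
    | (n+1) =>
      intro ω hω
      -- Leibniz expansion
      have hlb := leibniz_within hS hf1 hh (n+1) ω hω
      rw [hzero n ω hω] at hlb
      rw [Finset.sum_range_succ'
        (fun k => (((n+1).choose k : ℂ)) *
          (iteratedDerivWithin k (fun y => 1 - g y) S ω *
            iteratedDerivWithin (n+1-k) h S ω)) (n+1)] at hlb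
      simp only [Nat.choose_zero_right, Nat.cast_one, one_mul, Nat.sub_zero,
        iteratedDerivWithin_zero] at hlb
      have hmain : (1 - g ω) * iteratedDerivWithin (n+1) h S ω
          = -∑ k ∈ Finset.range (n+1), (((n+1).choose (k+1) : ℂ)) *
            (iteratedDerivWithin (k+1) (fun y => 1 - g y) S ω *
              iteratedDerivWithin (n+1-(k+1)) h S ω) := by
        linear_combination -hlb
      -- bound the norm
      have hnorm : ε * ‖iteratedDerivWithin (n+1) h S ω‖
          ≤ ∑ k ∈ Finset.range (n+1), (((n+1).choose (k+1) : ℝ)) *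
            (‖iteratedDerivWithin (k+1) g S ω‖ * ‖iteratedDerivWithin (n-k) h S ω‖) := by
        calc ε * ‖iteratedDerivWithin (n+1) h S ω‖
            ≤ ‖1 - g ω‖ * ‖iteratedDerivWithin (n+1) h S ω‖ := by
              gcongr; exact hlow ω hω
          _ = ‖(1 - g ω) * iteratedDerivWithin (n+1) h S ω‖ := (norm_mul _ _).symm
          _ = ‖∑ k ∈ Finset.range (n+1), (((n+1).choose (k+1) : ℂ)) *
              (iteratedDerivWithin (k+1) (fun y => 1 - g y) S ω *
                iteratedDerivWithin (n+1-(k+1)) h S ω)‖ := by rw [hmain, norm_neg]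
          _ ≤ ∑ k ∈ Finset.range (n+1), ‖(((n+1).choose (k+1) : ℂ)) *
              (iteratedDerivWithin (k+1) (fun y => 1 - g y) S ω *
                iteratedDerivWithin (n+1-(k+1)) h S ω)‖ := norm_sum_le _ _
          _ = ∑ k ∈ Finset.range (n+1), (((n+1).choose (k+1) : ℝ)) *
              (‖iteratedDerivWithin (k+1) g S ω‖ * ‖iteratedDerivWithin (n-k) h S ω‖) := by
              refine Finset.sum_congr rfl fun k _ => ?_
              have hnk : n + 1 - (k + 1) = n - k := by omega
              rw [hnk, norm_mul, norm_mul, hf1der k ω hω, Complex.norm_natCast]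
      -- termwise bound
      have hterm : ∀ k ∈ Finset.range (n+1),
          (((n+1).choose (k+1) : ℝ)) *
            (‖iteratedDerivWithin (k+1) g S ω‖ * ‖iteratedDerivWithin (n-k) h S ω‖)
          ≤ ((n+1).factorial : ℝ) * (B ^ (n+1) * (1/2) ^ (k+1)) := by
        intro k hk
        have hkn : k ≤ n := Nat.lt_succ_iff.1 (Finset.mem_range.1 hk)
        have h1 : ‖iteratedDerivWithin (k+1) g S ω‖ ≤ C * A^(k+1) * ((k+1).factorial : ℝ) :=
          hder (k+1) (Nat.succ_le_succ (Nat.zero_le k)) ω hω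
        have h2 : ‖iteratedDerivWithin (n-k) h S ω‖
            ≤ ε⁻¹ * B ^ (n-k) * ((n-k).factorial : ℝ) :=
          ih (n-k) (by omega) ω hω
        have hfact : (((n+1).choose (k+1) : ℝ)) * ((k+1).factorial : ℝ) * ((n-k).factorial : ℝ)
            = ((n+1).factorial : ℝ) := by
          have := Nat.choose_mul_factorial_mul_factorial (Nat.succ_le_succ hkn)
          have h3 : n + 1 - (k + 1) = n - k := by omega
          rw [h3] at this
          exact_mod_cast this
        calc (((n+1).choose (k+1) : ℝ)) *
              (‖iteratedDerivWithin (k+1) g S ω‖ * ‖iteratedDerivWithin (n-k) h S ω‖)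
            ≤ (((n+1).choose (k+1) : ℝ)) *
              ((C * A^(k+1) * ((k+1).factorial : ℝ)) * (ε⁻¹ * B ^ (n-k) * ((n-k).factorial : ℝ))) := by
              gcongr <;> first | exact norm_nonneg _ | exact h1 | exact h2
          _ = (((n+1).choose (k+1) : ℝ)) * ((k+1).factorial : ℝ) * ((n-k).factorial : ℝ)
              * (C * ε⁻¹ * A^(k+1) * B ^ (n-k)) := by ring
          _ = ((n+1).factorial : ℝ) * (C * ε⁻¹ * A^(k+1) * B ^ (n-k)) := by rw [hfact]
          _ ≤ ((n+1).factorial : ℝ) * (B ^ (n+1) * (1/2) ^ (k+1)) := by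
              refine mul_le_mul_of_nonneg_left ?_ (by positivity)
              have hCε : (1:ℝ) ≤ C / ε := by
                rw [le_div_iff₀ hε0]; nlinarith
              have key : C * ε⁻¹ * A^(k+1) * B ^ (n-k)
                  ≤ (C/ε)^(k+1) * A^(k+1) * B ^ (n-k) := by
                have h1 : C / ε ≤ (C/ε)^(k+1) := le_self_pow₀ hCε (Nat.succ_ne_zero k)
                calc C * ε⁻¹ * A^(k+1) * B ^ (n-k)
                    = (C/ε) * A^(k+1) * B ^ (n-k) := by rw [div_eq_mul_inv]
                  _ ≤ (C/ε)^(k+1) * A^(k+1) * B ^ (n-k) := by gcongr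
              refine key.trans (le_of_eq ?_)
              have hpow : B ^ (n+1) = B ^ (k+1) * B ^ (n-k) := by
                rw [← pow_add]
                congr 1
                omega
              have hbase : C/ε * A = B/2 := by rw [hB]; ring
              calc (C/ε)^(k+1) * A^(k+1) * B ^ (n-k)
                  = (B/2)^(k+1) * B ^ (n-k) := by rw [← mul_pow, hbase]
                _ = B ^ (n+1) * (1/2) ^ (k+1) := by rw [div_pow, hpow, one_div_pow]; ring
      -- sum up
      have hsum : ∑ k ∈ Finset.range (n+1), (((n+1).choose (k+1) : ℝ)) *
            (‖iteratedDerivWithin (k+1) g S ω‖ * ‖iteratedDerivWithin (n-k) h S ω‖)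
          ≤ ((n+1).factorial : ℝ) * B ^ (n+1) := by
        calc ∑ k ∈ Finset.range (n+1), (((n+1).choose (k+1) : ℝ)) *
              (‖iteratedDerivWithin (k+1) g S ω‖ * ‖iteratedDerivWithin (n-k) h S ω‖)
            ≤ ∑ k ∈ Finset.range (n+1), ((n+1).factorial : ℝ) * (B ^ (n+1) * (1/2) ^ (k+1)) :=
              Finset.sum_le_sum hterm
          _ = ((n+1).factorial : ℝ) * (B ^ (n+1) * ((∑ k ∈ Finset.range (n+1), (1/2:ℝ)^k) * (1/2))) := by
              rw [← Finset.mul_sum, ← Finset.mul_sum]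
              congr 1
              congr 1
              rw [Finset.sum_mul]
              exact Finset.sum_congr rfl fun k _ => pow_succ _ _
          _ ≤ ((n+1).factorial : ℝ) * (B ^ (n+1) * (2 * (1/2))) := by
              gcongr
              exact sum_geometric_two_le _
          _ = ((n+1).factorial : ℝ) * B ^ (n+1) := by ring
      have hεh : ε * ‖iteratedDerivWithin (n+1) h S ω‖ ≤ ((n+1).factorial : ℝ) * B ^ (n+1) :=
        hnorm.trans hsum
      rw [show ε⁻¹ * B ^ (n+1) * ((n+1).factorial : ℝ)
          = (((n+1).factorial : ℝ) * B ^ (n+1)) / ε by field_simp]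
      rw [le_div_iff₀ hε0]
      linarith [hεh]
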